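/- arXiv:2106.16015 — 2 statements merged into one kernel-verified Lean document; each statement's English description precedes it below -/
import Mathlib

section
/- Let A(u,v) be the arrow graph and let H = A(u,v) − u be the graph obtained by deleting the vertex u. Then {a2, v} is an odd cycle transversal of H, and every odd cycle transversal of H has size at least 2. -/
open SimpleGraph

/-- The nine vertices of the arrow graph `A(u,v)`. -/
inductive ArrowV : Type
  | u | a1 | a2 | a3 | v | b1 | b2 | b3 | b4
  deriving DecidableEq

instance instFintypeArrowV : Fintype ArrowV where
  elems := {ArrowV.u, ArrowV.a1, ArrowV.a2, ArrowV.a3, ArrowV.v, ArrowV.b1, ArrowV.b2,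
    ArrowV.b3, ArrowV.b4}
  complete := fun x => by cases x <;> simp

/-- The arrow graph `A(u,v)`, with edges
`u a1, a1 a2, a2 a3, a3 v, u b1, b1 a1, a1 b2, b2 a2, a2 b3, b3 a3, a3 b4, b4 v`. -/
def arrowGraph : SimpleGraph ArrowV :=
  SimpleGraph.fromRel (fun x y =>
    (x, y) ∈ ([(ArrowV.u, ArrowV.a1), (ArrowV.a1, ArrowV.a2), (ArrowV.a2, ArrowV.a3),
      (ArrowV.a3, ArrowV.v), (ArrowV.u, ArrowV.b1), (ArrowV.b1, ArrowV.a1),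
      (ArrowV.a1, ArrowV.b2), (ArrowV.b2, ArrowV.a2), (ArrowV.a2, ArrowV.b3),
      (ArrowV.b3, ArrowV.a3), (ArrowV.a3, ArrowV.b4), (ArrowV.b4, ArrowV.v)] :
        List (ArrowV × ArrowV)))

/-- `X` is an odd cycle transversal of `H`: the graph `H − X` contains no odd cycle. -/
def IsOCT {W : Type*} (H : SimpleGraph W) (X : Set W) : Prop :=
  ∀ (a : ↥Xᶜ) (c : (H.induce Xᶜ).Walk a a), c.IsCycle → ¬ Odd c.length

/-- The arrow graph with the vertex `u` deleted. -/
def arrowDelU : SimpleGraph ↥{w : ArrowV | w ≠ ArrowV.u} :=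
  arrowGraph.induce {w : ArrowV | w ≠ ArrowV.u}

/-! Deleting `u`, `a2` and `v` leaves the two paths `b1 a1 b2` and `b3 a3 b4`, which are bipartite
with the `b`-vertices on one side. Conversely `A(u,v) − u` contains the vertex-disjoint triangles
`a1 b2 a2` and `a3 b4 v`, and an odd cycle transversal must meet every triangle. -/

section

variable {W : Type*} {H : SimpleGraph W} {X : Set W}

theorem isOCT_of_forall_adj_eq_imp_mem (f : W → Bool)
    (hf : ∀ x y, H.Adj x y → f x = f y → x ∈ X ∨ y ∈ X) : IsOCT H X := by
  let c : (H.induce Xᶜ).Coloring Bool :=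
    Coloring.mk (fun x => f x) fun {x y} hxy hfxy => (hf x y hxy hfxy).elim x.2 y.2
  intro a w _ hodd
  exact Nat.not_even_iff_odd.mpr hodd ((c.even_length_iff_congr w).mpr Iff.rfl)

theorem IsOCT.exists_mem_of_isNClique_three (hX : IsOCT H X) {s : Finset W}
    (hs : H.IsNClique 3 s) : ∃ x ∈ s, x ∈ X := by
  classical
  obtain ⟨a, b, c, hab, hac, hbc, rfl⟩ := is3Clique_iff.mp hs
  by_contra! h
  simp only [Finset.mem_insert, Finset.mem_singleton, forall_eq_or_imp, forall_eq] at h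
  have hclique : (H.induce Xᶜ).IsNClique 3 {⟨a, h.1⟩, ⟨b, h.2.1⟩, ⟨c, h.2.2⟩} :=
    is3Clique_triple_iff.mpr ⟨hab, hac, hbc⟩
  obtain ⟨x, w, hw, hlen⟩ := is3Clique_iff_exists_cycle_length_three.mp ⟨_, hclique⟩
  exact hX x w hw (hlen ▸ by decide)

theorem IsOCT.two_le_ncard [Finite W] (hX : IsOCT H X) {s t : Finset W}
    (hs : H.IsNClique 3 s) (ht : H.IsNClique 3 t) (hst : Disjoint s t) : 2 ≤ X.ncard := by
  obtain ⟨x, hxs, hxX⟩ := hX.exists_mem_of_isNClique_three hs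
  obtain ⟨y, hyt, hyX⟩ := hX.exists_mem_of_isNClique_three ht
  exact (Set.one_lt_ncard_iff).mpr ⟨x, y, hxX, hyX, Finset.disjoint_left.mp hst hxs ∘ (· ▸ hyt)⟩

end

instance : DecidableRel arrowGraph.Adj := fun _ _ => by
  unfold arrowGraph; infer_instance

instance : DecidableRel arrowDelU.Adj := fun x y =>
  inferInstanceAs (Decidable (arrowGraph.Adj x.1 y.1))

def arrowColor : ArrowV → Bool
  | .b1 | .b2 | .b3 | .b4 => true
  | _ => false

/-- `{a2, v}` is an OCT of `A(u,v) − u`, and every OCT of `A(u,v) − u` has size at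
least 2. -/
theorem stmt11 :
    IsOCT arrowDelU
      {(⟨ArrowV.a2, by simp⟩ : ↥{w : ArrowV | w ≠ ArrowV.u}), ⟨ArrowV.v, by simp⟩} ∧
    (∀ X : Set ↥{w : ArrowV | w ≠ ArrowV.u}, IsOCT arrowDelU X → 2 ≤ X.ncard) := by
  refine ⟨isOCT_of_forall_adj_eq_imp_mem (arrowColor ·.1) (by decide), fun X hX => ?_⟩
  exact hX.two_le_ncard (s := {x | x.1 ∈ ({.a1, .b2, .a2} : Finset ArrowV)})
    (t := {x | x.1 ∈ ({.a3, .b4, .v} : Finset ArrowV)}) (by decide) (by decide) (by decide)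
end

section
/- Let G be a 2-connected finite simple graph on vertex set V with |V| ≥ 3, and let S ⊆ V. If G contains no even S-cycle, then every vertex of S has degree exactly 2 in G. -/
/-!
For `w ∈ S`, a path between two distinct neighbours of `w` that avoids `w` closes up through `w`
into an `S`-cycle two edges longer, so every such path is odd. If `w` had three neighbours
`a, b, c`, the connected graph `G - w` would contain paths `a–b`, `a–c`, `b–c` of even total
length: take a path from `a` to `b` and a path from `c` meeting it only at its end `x`; the three
paths built from the segments `a–x`, `x–b`, `c–x` use each segment twice. Three odd lengths cannot
have an even sum, so `deg w ≤ 2`, while 2-connectivity gives every vertex two neighbours.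
-/

open SimpleGraph

/-- A finite simple graph is 2-connected if it has at least 3 vertices, is connected,
and deleting any single vertex leaves a connected graph. -/
def TwoConnected {V : Type*} [Fintype V] (G : SimpleGraph V) : Prop :=
  3 ≤ Fintype.card V ∧ G.Connected ∧
    ∀ v : V, (G.induce {w : V | w ≠ v}).Connected

namespace SimpleGraph

variable {V : Type*} {G : SimpleGraph V}

namespace Walk

lemma IsPath.append {u v w : V} {p : G.Walk u v} {q : G.Walk v w} (hp : p.IsPath)
    (hq : q.IsPath) (h : ∀ z ∈ p.support, z ∈ q.support → z = v) : (p.append q).IsPath := by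
  refine IsPath.mk' ?_
  rw [support_append, List.nodup_append']
  have hq' := hq.support_nodup
  rw [← q.cons_tail_support, List.nodup_cons] at hq'
  exact ⟨hp.support_nodup, hq'.2,
    fun z hzp hzq => hq'.1 (h z hzp (List.mem_of_mem_tail hzq) ▸ hzq)⟩

lemma IsPath.isCycle_cons_cons {w a b : V} {p : G.Walk a b} (hp : p.IsPath)
    (hwa : G.Adj w a) (hbw : G.Adj b w) (hab : a ≠ b) (hw : w ∉ p.support) :
    (cons hbw (cons hwa p)).IsCycle := by
  refine (cons_isCycle_iff _ _).mpr ⟨hp.cons hw, ?_⟩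
  rw [edges_cons, List.mem_cons, Sym2.eq_iff]
  rintro ((⟨rfl, -⟩ | ⟨rfl, -⟩) | hmem)
  · exact hbw.ne rfl
  · exact hab rfl
  · exact hw (p.snd_mem_support_of_mem_edges hmem)

lemma exists_isPath_to_set (T : Set V) {u v : V} (q : G.Walk u v) (hv : v ∈ T) :
    ∃ x ∈ T, ∃ r : G.Walk u x, r.IsPath ∧ ∀ z ∈ r.support, z ∈ T → z = x := by
  classical
  induction q with
  | nil => exact ⟨_, hv, nil, by simp, by simp⟩
  | @cons u _ _ hadj _ ih =>
    by_cases hu : u ∈ T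
    · exact ⟨u, hu, nil, by simp, by simp⟩
    obtain ⟨x, hx, r, -, hr⟩ := ih hv
    refine ⟨x, hx, (cons hadj r).bypass, bypass_isPath _, fun z hz hzT => ?_⟩
    rcases List.mem_cons.mp (support_bypass_subset_support _ hz) with rfl | hz
    · exact absurd hzT hu
    · exact hr z hz hzT

end Walk

theorem Preconnected.exists_isPath_triangle (hG : G.Preconnected) (a b c : V) :
    ∃ (p : G.Walk a b) (q : G.Walk a c) (r : G.Walk b c),
      p.IsPath ∧ q.IsPath ∧ r.IsPath ∧ Even (p.length + q.length + r.length) := by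
  classical
  obtain ⟨P, hP⟩ := (hG a b).exists_isPath
  obtain ⟨Q⟩ := hG c a
  obtain ⟨x, hxP, R, hR, hRP⟩ :=
    Walk.exists_isPath_to_set {z | z ∈ P.support} Q P.start_mem_support
  have hxP : x ∈ P.support := hxP
  have hmeet₁ : ∀ z ∈ (P.takeUntil x hxP).support, z ∈ R.reverse.support → z = x :=
    fun z hz hzR => hRP z (by simpa using hzR) (P.support_takeUntil_subset_support hxP hz)
  have hmeet₂ : ∀ z ∈ (P.dropUntil x hxP).reverse.support, z ∈ R.reverse.support → z = x :=
    fun z hz hzR => hRP z (by simpa using hzR)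
      (P.support_dropUntil_subset_support hxP (by simpa using hz))
  refine ⟨P, _, _, hP, (hP.takeUntil hxP).append hR.reverse hmeet₁,
    (hP.dropUntil hxP).reverse.append hR.reverse hmeet₂, ?_⟩
  have hlen := congrArg Walk.length (P.take_spec hxP)
  simp only [Walk.length_append, Walk.length_reverse] at hlen ⊢
  exact ⟨P.length + R.length, by omega⟩

theorem degree_le_two_of_odd_isPath {w : V} [Fintype (G.neighborSet w)]
    (hconn : (G.induce {z | z ≠ w}).Preconnected)
    (hodd : ∀ a b, G.Adj w a → G.Adj w b → a ≠ b →
      ∀ p : G.Walk a b, p.IsPath → w ∉ p.support → Odd p.length) :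
    G.degree w ≤ 2 := by
  by_contra! hdeg
  rw [← card_neighborFinset_eq_degree, Finset.two_lt_card_iff] at hdeg
  obtain ⟨a, b, c, ha, hb, hc, hab, hac, hbc⟩ := hdeg
  simp only [mem_neighborFinset] at ha hb hc
  have hodd_induce : ∀ {x y : {z | z ≠ w}}, G.Adj w x → G.Adj w y → x ≠ y →
      ∀ p : (G.induce {z | z ≠ w}).Walk x y, p.IsPath → Odd p.length := by
    intro x y hx hy hxy p hp
    have hw : w ∉ (p.map (Embedding.induce {z | z ≠ w}).toHom).support := fun hmem => by
      rw [Walk.support_map, List.mem_map] at hmem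
      obtain ⟨z, -, hz⟩ := hmem
      exact z.2 hz
    exact p.length_map _ ▸ hodd _ _ hx hy (Subtype.val_injective.ne hxy) _
      (hp.map Subtype.val_injective) hw
  obtain ⟨p, q, r, hp, hq, hr, heven⟩ :=
    hconn.exists_isPath_triangle ⟨a, ha.ne'⟩ ⟨b, hb.ne'⟩ ⟨c, hc.ne'⟩
  have hp_odd := hodd_induce ha hb (by simpa using hab) p hp
  have hq_odd := hodd_induce ha hc (by simpa using hac) q hq
  have hr_odd := hodd_induce hb hc (by simpa using hbc) r hr
  exact Nat.not_even_iff_odd.mpr ((hp_odd.add_odd hq_odd).add_odd hr_odd) heven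

end SimpleGraph

theorem TwoConnected.two_le_degree {V : Type*} [Fintype V] {G : SimpleGraph V}
    [DecidableRel G.Adj] (hG : TwoConnected G) (w : V) : 2 ≤ G.degree w := by
  obtain ⟨hcard, hconn, hdel⟩ := hG
  have : Nontrivial V := Fintype.one_lt_card_iff_nontrivial.mp (by omega)
  obtain ⟨u, hwu⟩ := hconn.preconnected.exists_adj_of_nontrivial w
  classical
  obtain ⟨v, -, hv⟩ := Finset.exists_mem_notMem_of_card_lt_card
    (s := {w, u}) (t := Finset.univ) ((Finset.card_le_two).trans_lt (by simp; omega))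
  simp only [Finset.mem_insert, Finset.mem_singleton, not_or] at hv
  obtain ⟨q⟩ := (hdel u).preconnected ⟨w, hwu.ne⟩ ⟨v, hv.2⟩
  set y := q.snd
  have hwy : G.Adj w y := q.adj_snd (q.not_nil_of_ne fun h => hv.1 (congrArg Subtype.val h).symm)
  calc 2 = ({u, y.val} : Finset V).card := (Finset.card_pair fun h => y.2 h.symm).symm
    _ ≤ (G.neighborFinset w).card :=
      Finset.card_le_card (by simp [Finset.insert_subset_iff, hwu, hwy])
    _ = G.degree w := card_neighborFinset_eq_degree G w

/-- If a 2-connected graph contains no even `S`-cycle, then every vertex of `S` has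
degree exactly 2. -/
theorem stmt13 {V : Type*} [Fintype V] (G : SimpleGraph V) [DecidableRel G.Adj]
    (hG : TwoConnected G) (S : Set V)
    (h : ¬ ∃ (a : V) (c : G.Walk a a), c.IsCycle ∧ Even c.length ∧ ∃ w ∈ S, w ∈ c.support) :
    ∀ w ∈ S, G.degree w = 2 := by
  intro w hw
  refine le_antisymm (degree_le_two_of_odd_isPath (hG.2.2 w).preconnected
    fun a b hwa hwb hab p hp hwp => ?_) (hG.two_le_degree w)
  refine Nat.not_even_iff_odd.mp fun heven => h ⟨b, _, hp.isCycle_cons_cons hwa hwb.symm hab hwp,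
    by simpa [Nat.even_add_one] using heven, w, hw, by simp⟩
end
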